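/- arXiv:1703.09006 — 2 statements merged into one kernel-verified Lean document; each statement's English description precedes it below -/
import Mathlib

section
/- Let X ⊴ Y be finite groups, ϑ ∈ Irr(X), I = I_Y(ϑ) its inertia group, and let λ ∈ Irr(I | ϑ) with λ^Y = ψ ∈ Irr(Y). Let σ ∈ Gal(Q_{|Y|}/Q) and t ∈ Y with ϑ^σ = ϑ^t. If ψ^σ = ψ·η for a linear character η of Y trivial on X and Y/X is abelian, then (λ^σ)^{t^{-1}} = λ·η|_I. -/
open scoped Classical BigOperators

/-- The inner product of two class functions on a finite group. -/
noncomputable def charInner {G : Type} [Group G] (φ ψ : G → ℂ) : ℂ :=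
  (Nat.card G : ℂ)⁻¹ * ∑ᶠ g : G, φ g * ψ g⁻¹

/-- `χ : G → ℂ` is an irreducible (complex) character of `G`. -/
def IsIrredChar (G : Type) [Group G] (χ : G → ℂ) : Prop :=
  ∃ V : FDRep ℂ G, CategoryTheory.Simple V ∧ χ = V.character

/-- The character of `Y` induced from a character of a subgroup `I`. -/
noncomputable def indCharTop {Y : Type} [Group Y] [Fintype Y] (I : Subgroup Y)
    (f : ↥I → ℂ) : Y → ℂ :=
  fun y => (Nat.card ↥I : ℂ)⁻¹ * ∑ᶠ g : Y, if h : g * y * g⁻¹ ∈ I then f ⟨_, h⟩ else 0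

namespace StmtNine

open CategoryTheory FDRep Module Representation

noncomputable section

set_option linter.unusedSectionVars false

variable {G H : Type} [Group G] [Group H] [Fintype G]

/-! ### basic category/hom plumbing -/

def mkHom {V W : FDRep ℂ G} (f : V →ₗ[ℂ] W) (hf : ∀ (g : G) (x : V), f (V.ρ g x) = W.ρ g (f x)) :
    V ⟶ W :=
  ⟨FGModuleCat.ofHom f, by intro g; ext x; exact hf g x⟩

lemma hom_comm {V W : FDRep ℂ G} (f : V ⟶ W) (g : G) (x : V) :
    f.hom (V.ρ g x) = W.ρ g (f.hom x) :=
  congrFun (congrArg (fun (l : V.V ⟶ W.V) => (l : V → W)) (f.comm g)) x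

lemma hom_ext {V W : FDRep ℂ G} (F F' : V ⟶ W) (h : ∀ x : V, F.hom x = F'.hom x) : F = F' := by
  have : F.hom = F'.hom := by ext x; exact h x
  exact Action.Hom.ext this

/-! ### charInner basics -/

lemma charInner_apply (f h : G → ℂ) :
    charInner f h = (Fintype.card G : ℂ)⁻¹ * ∑ g : G, f g * h g⁻¹ := by
  rw [charInner, finsum_eq_sum_of_fintype, Nat.card_eq_fintype_card]

lemma sum_mul_inv_eq (f h : G → ℂ) :
    ∑ g : G, f g * h g⁻¹ = (Fintype.card G : ℂ) * charInner f h := by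
  rw [charInner_apply, ← mul_assoc, mul_inv_cancel₀ (by exact_mod_cast Fintype.card_ne_zero :
    (Fintype.card G : ℂ) ≠ 0), one_mul]

lemma charInner_comp_mulEquiv (e : G ≃* G) (f h : G → ℂ) :
    charInner (fun g => f (e g)) (fun g => h (e g)) = charInner f h := by
  rw [charInner_apply, charInner_apply]
  congr 1
  refine Fintype.sum_equiv e.toEquiv _ _ fun g => ?_
  show f (e g) * h (e g⁻¹) = f (e g) * h ((e g)⁻¹)
  rw [map_inv]

lemma charInner_comp_left (e : G ≃* G) (f h : G → ℂ) :
    charInner (fun g => f (e g)) h = charInner f (fun g => h (e.symm g)) := by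
  have := charInner_comp_mulEquiv e f (fun g => h (e.symm g))
  simp only [MulEquiv.symm_apply_apply] at this
  exact this

lemma charInner_map (σ : ℂ →+* ℂ) (f h : G → ℂ) :
    charInner (fun g => σ (f g)) (fun g => σ (h g)) = σ (charInner f h) := by
  rw [charInner_apply, charInner_apply, map_mul, map_inv₀, map_natCast, map_sum]
  simp only [map_mul]

/-! ### orthogonality -/

lemma charInner_char_char (V W : FDRep ℂ G) [Simple V] [Simple W] :
    charInner V.character W.character = if Nonempty (V ≅ W) then 1 else 0 := by
  letI : Invertible ((Nat.card G) : ℂ) :=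
    invertibleOfNonzero (by exact_mod_cast Nat.card_pos.ne')
  have h := FDRep.char_orthonormal (k := ℂ) (G := G) V W
  rw [charInner, finsum_eq_sum_of_fintype]
  exact h

lemma charInner_self_one (V : FDRep ℂ G) [Simple V] :
    charInner V.character V.character = 1 := by
  rw [charInner_char_char, if_pos ⟨Iso.refl V⟩]

lemma char_eq_of_charInner_ne_zero (V W : FDRep ℂ G) [Simple V] [Simple W]
    (h : charInner V.character W.character ≠ 0) : V.character = W.character := by
  rw [charInner_char_char] at h
  by_cases hn : Nonempty (V ≅ W)
  · exact char_iso hn.some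
  · rw [if_neg hn] at h; exact absurd rfl h

/-! ### dimension formula and simplicity criterion -/

lemma charInner_eq_finrank_hom (V W : FDRep ℂ G) :
    charInner V.character W.character = (finrank ℂ (W ⟶ V) : ℂ) := by
  letI hinv : Invertible ((Nat.card G) : ℂ) :=
    invertibleOfNonzero (by exact_mod_cast Nat.card_pos.ne')
  rw [charInner, finsum_eq_sum_of_fintype]
  exact FDRep.scalar_product_char_eq_finrank_equivariant W V

def subRep (V : FDRep ℂ G) (p : Submodule ℂ V) (hp : ∀ (g : G), ∀ x ∈ p, V.ρ g x ∈ p) :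
    FDRep ℂ G :=
  FDRep.of
    { toFun := fun g => (V.ρ g).restrict (hp g)
      map_one' := by ext x; simp [LinearMap.restrict_apply]
      map_mul' := by intro a b; ext x; simp [LinearMap.restrict_apply] }

lemma mono_injective {U W : FDRep ℂ G} (f : U ⟶ W) [Mono f] :
    Function.Injective f.hom.hom.hom := by
  set K : Submodule ℂ U := LinearMap.ker f.hom.hom.hom with hK
  have hinv : ∀ (g : G), ∀ x ∈ K, U.ρ g x ∈ K := by
    intro g x hx
    have h1 : f.hom (U.ρ g x) = W.ρ g (f.hom x) := hom_comm f g x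
    have hx' : f.hom x = 0 := hx
    show f.hom (U.ρ g x) = 0
    rw [h1, hx', map_zero]
  let S := subRep U K hinv
  let ι : S ⟶ U := mkHom (K.subtype) (fun g x => rfl)
  have hcomp : ι ≫ f = (0 : S ⟶ U) ≫ f := by
    apply hom_ext; intro x
    show f.hom (K.subtype x) = f.hom ((0 : S ⟶ U).hom x)
    have hx : f.hom (K.subtype x) = 0 := x.2
    have h0 : (0 : S ⟶ U).hom x = 0 := rfl
    rw [h0, map_zero, hx]
  have hι : ι = 0 := Mono.right_cancellation _ _ hcomp
  rw [← LinearMap.ker_eq_bot, ← hK, Submodule.eq_bot_iff]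
  intro x hx
  have : ι.hom ⟨x, hx⟩ = (0 : S ⟶ U).hom ⟨x, hx⟩ := by rw [hι]
  exact this

lemma simple_of_finrank_end_one (W : FDRep ℂ G) (h : finrank ℂ (W ⟶ W) = 1) :
    Simple W := by
  constructor
  intro U f hm
  constructor
  · intro hiso hf0
    have h1 : (𝟙 W : W ⟶ W) = 0 := by
      have h2 := IsIso.inv_hom_id f
      have h3 : inv f ≫ f = inv f ≫ (0 : U ⟶ W) := congrArg (fun u => inv f ≫ u) hf0
      rw [h2] at h3
      rw [h3, Limits.comp_zero]
    have hall : ∀ e : W ⟶ W, e = 0 := fun e => by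
      calc e = e ≫ 𝟙 W := by simp
      _ = 0 := by rw [h1, Limits.comp_zero]
    have hsub : Subsingleton (W ⟶ W) := ⟨fun a b => by rw [hall a, hall b]⟩
    rw [finrank_zero_of_subsingleton] at h; exact one_ne_zero h.symm
  · intro hf0
    have hinj : Function.Injective f.hom.hom.hom := mono_injective f
    obtain ⟨π₀, hπ₀⟩ := LinearMap.exists_leftInverse_of_injective f.hom.hom.hom
      (LinearMap.ker_eq_bot.mpr hinj)
    have hπ₀' : ∀ x : U, π₀ (f.hom x) = x := fun x => congrArg (fun l => l x) hπ₀
    let π : W →ₗ[ℂ] U :=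
      (Fintype.card G : ℂ)⁻¹ • ∑ g : G, (U.ρ g) ∘ₗ (π₀ ∘ₗ (W.ρ g⁻¹ : W →ₗ[ℂ] W))
    have hcard : (Fintype.card G : ℂ) ≠ 0 := by exact_mod_cast Fintype.card_ne_zero
    have hπapp : ∀ x : W, π x = (Fintype.card G : ℂ)⁻¹ • ∑ g : G, (U.ρ g) (π₀ ((W.ρ g⁻¹) x)) := by
      intro x
      simp only [π, LinearMap.smul_apply, LinearMap.sum_apply, LinearMap.comp_apply]
    have hπcomm : ∀ (g : G) (x : W), π (W.ρ g x) = U.ρ g (π x) := by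
      intro h x
      rw [hπapp, hπapp, map_smul, map_sum]
      congr 1
      refine Fintype.sum_equiv (Equiv.mulLeft h⁻¹) _ _ fun g => ?_
      show (U.ρ g) (π₀ ((W.ρ g⁻¹) ((W.ρ h) x)))
          = (U.ρ h) ((U.ρ (h⁻¹ * g)) (π₀ ((W.ρ (h⁻¹ * g)⁻¹) x)))
      have e1 : (W.ρ g⁻¹) ((W.ρ h) x) = (W.ρ ((h⁻¹ * g)⁻¹)) x := by
        rw [← Module.End.mul_apply, ← map_mul, mul_inv_rev, inv_inv]
      have e2 : (U.ρ h) ((U.ρ (h⁻¹ * g)) (π₀ ((W.ρ (h⁻¹ * g)⁻¹) x)))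
          = (U.ρ (h * (h⁻¹ * g))) (π₀ ((W.ρ (h⁻¹ * g)⁻¹) x)) := by
        rw [← Module.End.mul_apply, ← map_mul]
      rw [e1, e2, mul_inv_cancel_left]
    have hπf : ∀ x : U, π (f.hom x) = x := by
      intro x
      rw [hπapp]
      have he : ∀ g : G, (U.ρ g) (π₀ ((W.ρ g⁻¹) (f.hom x))) = x := by
        intro g
        rw [← hom_comm f g⁻¹ x, hπ₀', ← Module.End.mul_apply, ← map_mul, mul_inv_cancel,
          map_one, Module.End.one_apply]
      rw [Finset.sum_congr rfl (fun g _ => he g), Finset.sum_const, Finset.card_univ,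
        ← Nat.cast_smul_eq_nsmul ℂ, smul_smul, inv_mul_cancel₀ hcard, one_smul]
    let P : W ⟶ U := mkHom π hπcomm
    have hfP : f ≫ P = 𝟙 U := hom_ext _ _ (fun x => hπf x)
    have hone : (𝟙 W : W ⟶ W) ≠ 0 := by
      intro h1
      have hall : ∀ e : W ⟶ W, e = 0 := fun e => by
        calc e = e ≫ 𝟙 W := by simp
        _ = 0 := by rw [h1, Limits.comp_zero]
      have hsub : Subsingleton (W ⟶ W) := ⟨fun a b => by rw [hall a, hall b]⟩
      rw [finrank_zero_of_subsingleton] at h; exact one_ne_zero h.symm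
    obtain ⟨c, hc⟩ := (finrank_eq_one_iff_of_nonzero' (𝟙 W : W ⟶ W) hone).mp h (P ≫ f)
    have hidem : (P ≫ f) ≫ (P ≫ f) = P ≫ f := by
      rw [Category.assoc, ← Category.assoc f P f, hfP, Category.id_comp]
    have hc2 : (c * c) • (𝟙 W : W ⟶ W) = c • (𝟙 W : W ⟶ W) := by
      calc (c * c) • (𝟙 W : W ⟶ W) = (c • 𝟙 W) ≫ (c • 𝟙 W) := by
            rw [CategoryTheory.Linear.smul_comp, CategoryTheory.Linear.comp_smul,
              Category.comp_id, smul_smul]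
      _ = (P ≫ f) ≫ (P ≫ f) := by rw [hc]
      _ = P ≫ f := hidem
      _ = c • 𝟙 W := hc.symm
    have hcc : c * c = c := by
      by_contra hne
      have : (c * c - c) • (𝟙 W : W ⟶ W) = 0 := by rw [sub_smul, hc2, sub_self]
      rcases smul_eq_zero.mp this with h' | h'
      · exact hne (by linear_combination h')
      · exact hone h'
    have hc01 : c = 0 ∨ c = 1 := by
      have : c * (c - 1) = 0 := by ring_nf; linear_combination hcc
      rcases mul_eq_zero.mp this with h' | h'
      · exact Or.inl h'
      · exact Or.inr (by linear_combination h')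
    rcases hc01 with h' | h'
    · exfalso
      have : f ≫ (P ≫ f) = f := by rw [← Category.assoc, hfP, Category.id_comp]
      rw [← hc, h', zero_smul, Limits.comp_zero] at this
      exact hf0 this.symm
    · have hPfid : P ≫ f = 𝟙 W := by rw [← hc, h', one_smul]
      exact ⟨⟨P, hfP, hPfid⟩⟩

lemma simple_of_charInner_one (W : FDRep ℂ G)
    (h : charInner W.character W.character = 1) : Simple W := by
  apply simple_of_finrank_end_one
  have := (charInner_eq_finrank_hom W W).symm.trans h
  exact_mod_cast this

/-- Schur: an equivariant endomorphism of a simple rep is scalar. -/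
lemma schur_scalar (W : FDRep ℂ G) [Simple W] (f : W →ₗ[ℂ] W)
    (hf : ∀ (g : G) (x : W), f (W.ρ g x) = W.ρ g (f x)) :
    ∃ c : ℂ, ∀ x : W, f x = c • x := by
  have h1 : finrank ℂ (W ⟶ W) = 1 := by
    rw [FDRep.finrank_hom_simple_simple (k := ℂ) (G := G) W W, if_pos ⟨Iso.refl W⟩]
  have hid : (𝟙 W : W ⟶ W) ≠ 0 := id_nonzero W
  obtain ⟨c, hc⟩ := (finrank_eq_one_iff_of_nonzero' (𝟙 W : W ⟶ W) hid).mp h1 (mkHom f hf)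
  refine ⟨c, fun x => ?_⟩
  have := congrFun (congrArg (fun (l : W.V ⟶ W.V) => (l : W → W)) (congrArg Action.Hom.hom hc)) x
  exact this.symm

lemma simple_finrank_ne_zero (V : FDRep ℂ G) [Simple V] : (finrank ℂ V : ℂ) ≠ 0 := by
  have hid : (𝟙 V : V ⟶ V) ≠ 0 := id_nonzero V
  intro h
  have h0 : finrank ℂ V = 0 := by exact_mod_cast h
  have : Subsingleton V := (Module.finrank_zero_iff (R := ℂ) (M := V)).mp h0
  exact hid (hom_ext _ _ (fun x => this.allEq _ _))

/-! ### constructions of representations -/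

lemma of_character {V : Type} [AddCommGroup V] [Module ℂ V] [FiniteDimensional ℂ V]
    (ρ : Representation ℂ G V) (g : G) :
    (FDRep.of ρ).character g = LinearMap.trace ℂ V (ρ g) := rfl

def twistRep (V : FDRep ℂ G) (η : G →* ℂ) : FDRep ℂ G :=
  FDRep.of (V := V)
    { toFun := fun g => η g • V.ρ g
      map_one' := by simp
      map_mul' := fun a b => by
        ext x
        simp [Module.End.mul_apply, smul_smul, mul_comm] }

lemma twistRep_character (V : FDRep ℂ G) (η : G →* ℂ) (g : G) :
    (twistRep V η).character g = η g * V.character g := by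
  rw [twistRep, of_character]
  show LinearMap.trace ℂ V (η g • V.ρ g) = _
  rw [map_smul]
  rfl

def compRep (V : FDRep ℂ G) (c : H →* G) : FDRep ℂ H :=
  FDRep.of (V := V) (V.ρ.comp c)

lemma compRep_character (V : FDRep ℂ G) (c : H →* G) (h : H) :
    (compRep V c).character h = V.character (c h) := rfl

def galRep (σ : ℂ →+* ℂ) (V : FDRep ℂ G) : FDRep ℂ G :=
  FDRep.of (V := Fin (finrank ℂ V) → ℂ)
    { toFun := fun g => Matrix.toLin'
        ((LinearMap.toMatrix (finBasis ℂ V) (finBasis ℂ V) (V.ρ g)).map σ)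
      map_one' := by
        show Matrix.toLin' ((LinearMap.toMatrix (finBasis ℂ V) (finBasis ℂ V) (V.ρ 1)).map σ) = 1
        rw [map_one, LinearMap.toMatrix_one, Matrix.map_one σ (map_zero σ) (map_one σ),
          Matrix.toLin'_one]
        rfl
      map_mul' := fun a b => by
        show Matrix.toLin' ((LinearMap.toMatrix (finBasis ℂ V) (finBasis ℂ V) (V.ρ (a * b))).map σ)
          = Matrix.toLin' ((LinearMap.toMatrix (finBasis ℂ V) (finBasis ℂ V) (V.ρ a)).map σ) *
            Matrix.toLin' ((LinearMap.toMatrix (finBasis ℂ V) (finBasis ℂ V) (V.ρ b)).map σ)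
        rw [map_mul]
        show Matrix.toLin' ((LinearMap.toMatrix _ _ ((V.ρ a) * (V.ρ b))).map σ) = _
        rw [LinearMap.toMatrix_mul, Matrix.map_mul, Matrix.toLin'_mul]
        rfl }

lemma galRep_character (σ : ℂ →+* ℂ) (V : FDRep ℂ G) (g : G) :
    (galRep σ V).character g = σ (V.character g) := by
  rw [galRep, of_character]
  show LinearMap.trace ℂ _ (Matrix.toLin'
    ((LinearMap.toMatrix (finBasis ℂ V) (finBasis ℂ V) (V.ρ g)).map σ)) = _
  rw [LinearMap.trace_eq_matrix_trace ℂ (Pi.basisFun ℂ (Fin (finrank ℂ V))),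
    LinearMap.toMatrix_eq_toMatrix', LinearMap.toMatrix'_toLin']
  rw [FDRep.character, LinearMap.trace_eq_matrix_trace ℂ (finBasis ℂ V)]
  simp [Matrix.trace, Matrix.diag, map_sum]

variable {Y : Type} [Group Y] [Fintype Y]

lemma clifford_aux {X I : Subgroup Y} [hN : X.Normal] (hXI : X ≤ I)
    (Vθ : FDRep ℂ ↥X) [Simple Vθ] (Wl : FDRep ℂ ↥I) [Simple Wl]
    (hInv : ∀ (i : ↥I) (x : ↥X), Vθ.character (MulAut.conjNormal (i : Y) x) = Vθ.character x)
    (h0 : charInner (fun x : ↥X => Wl.character (Subgroup.inclusion hXI x)) Vθ.character ≠ 0)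
    (a : Y)
    (ha : charInner (fun x : ↥X => Wl.character (Subgroup.inclusion hXI x))
      (fun x => Vθ.character (MulAut.conjNormal a x)) ≠ 0) :
    ∀ x : ↥X, Vθ.character (MulAut.conjNormal a x) = Vθ.character x := by
  classical
  by_cases hiso : ∀ x : ↥X, Vθ.character (MulAut.conjNormal a x) = Vθ.character x
  · exact hiso
  exfalso
  set θ : ↥X → ℂ := Vθ.character with hθ
  set lamX : ↥X → ℂ := fun x => Wl.character (Subgroup.inclusion hXI x) with hlamX
  set e : ↥X ≃* ↥X := MulAut.conjNormal a with he
  set θh : ↥X → ℂ := fun x => θ (e x) with hθh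
  let Vθh : FDRep ℂ ↥X := compRep Vθ e.toMonoidHom
  have hVθh_char : ∀ x, Vθh.character x = θh x := fun x => compRep_character Vθ e.toMonoidHom x
  haveI : Simple Vθh := by
    apply simple_of_charInner_one
    rw [show (Vθh.character : ↥X → ℂ) = fun x => θ (e x) from funext hVθh_char,
      charInner_comp_mulEquiv e θ θ]
    exact charInner_self_one Vθ
  -- orthogonality of θ and θh
  have horth : charInner θ θh = 0 := by
    have h := charInner_char_char Vθ Vθh
    rw [if_neg] at h
    · have h2 : charInner θ θh = charInner Vθ.character Vθh.character := by
        rw [show (Vθh.character : ↥X → ℂ) = θh from funext hVθh_char]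
      rw [h2, h]
    · rintro ⟨i⟩
      have hc := char_iso i
      exact hiso (fun x => (hVθh_char x).symm.trans (congrFun hc x).symm)
  set n : ℂ := (Fintype.card ↥X : ℂ) with hn
  have hn0 : n ≠ 0 := by rw [hn]; exact_mod_cast Fintype.card_ne_zero
  set incl : ↥X →* ↥I := Subgroup.inclusion hXI with hincl
  -- the averaged operator P on Wl
  set P : Wl →ₗ[ℂ] Wl := ∑ x : ↥X, θ x⁻¹ • (Wl.ρ (incl x) : Wl →ₗ[ℂ] Wl) with hP
  have hPapp : ∀ v : Wl, P v = ∑ x : ↥X, θ x⁻¹ • (Wl.ρ (incl x) v) := by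
    intro v; rw [hP]; simp [LinearMap.sum_apply]
  have hPcomm : ∀ (i : ↥I) (v : Wl), P (Wl.ρ i v) = Wl.ρ i (P v) := by
    intro i v
    rw [hPapp, hPapp, map_sum]
    refine Fintype.sum_equiv (MulAut.conjNormal ((i : Y)⁻¹)).toEquiv _ _ fun x => ?_
    show θ x⁻¹ • (Wl.ρ (incl x)) ((Wl.ρ i) v)
        = (Wl.ρ i) (θ (MulAut.conjNormal ((i : Y)⁻¹) x)⁻¹ •
            (Wl.ρ (incl (MulAut.conjNormal ((i : Y)⁻¹) x))) v)
    have hval : θ (MulAut.conjNormal ((i : Y)⁻¹) x)⁻¹ = θ x⁻¹ := by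
      have h1 : (MulAut.conjNormal ((i : Y)⁻¹) x)⁻¹ = MulAut.conjNormal ((i : Y)⁻¹) x⁻¹ := by
        rw [← map_inv]
      rw [h1]
      have h2 := hInv i⁻¹ x⁻¹
      have h3 : ((i⁻¹ : ↥I) : Y) = ((i : Y))⁻¹ := rfl
      rw [h3] at h2
      rw [hθ]
      exact h2
    have hmul : incl x * i = i * incl (MulAut.conjNormal ((i : Y)⁻¹) x) := by
      apply Subtype.ext
      push_cast [hincl]
      simp only [MulAut.conjNormal_apply, Subgroup.coe_inclusion]
      group
    rw [hval, map_smul]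
    congr 1
    rw [← Module.End.mul_apply, ← map_mul, hmul, map_mul, Module.End.mul_apply]
  obtain ⟨cP, hcP⟩ := schur_scalar Wl P hPcomm
  have htraceP : LinearMap.trace ℂ Wl P = n * charInner lamX θ := by
    rw [hP, map_sum]
    have hterm : ∀ x : ↥X,
        LinearMap.trace ℂ Wl (θ x⁻¹ • (Wl.ρ (incl x) : Wl →ₗ[ℂ] Wl)) = lamX x * θ x⁻¹ := by
      intro x
      rw [map_smul]
      have : LinearMap.trace ℂ Wl (Wl.ρ (incl x)) = lamX x := rfl
      rw [this, smul_eq_mul, mul_comm]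
    rw [Finset.sum_congr rfl (fun x _ => hterm x), sum_mul_inv_eq lamX θ, hn]
  have hPid : P = cP • LinearMap.id := by
    ext v; rw [hcP v]; rfl
  have hcP0 : cP ≠ 0 := by
    intro hc0
    rw [hPid, hc0, zero_smul, map_zero] at htraceP
    exact (mul_ne_zero hn0 h0) htraceP.symm
  -- the operator T on Vθ
  set T : Vθ →ₗ[ℂ] Vθ := ∑ x : ↥X, θh x⁻¹ • (Vθ.ρ x : Vθ →ₗ[ℂ] Vθ) with hT
  have hTapp : ∀ v : Vθ, T v = ∑ x : ↥X, θh x⁻¹ • (Vθ.ρ x v) := by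
    intro v; rw [hT]; simp [LinearMap.sum_apply]
  have hTcomm : ∀ (y : ↥X) (v : Vθ), T (Vθ.ρ y v) = Vθ.ρ y (T v) := by
    intro y v
    rw [hTapp, hTapp, map_sum]
    refine Fintype.sum_equiv (MulAut.conj y⁻¹).toEquiv _ _ fun x => ?_
    show θh x⁻¹ • (Vθ.ρ x) ((Vθ.ρ y) v) = (Vθ.ρ y) (θh (MulAut.conj y⁻¹ x)⁻¹ •
      (Vθ.ρ (MulAut.conj y⁻¹ x)) v)
    have hcx : (MulAut.conj y⁻¹ x) = y⁻¹ * x * y := by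
      simp [MulAut.conj_apply]
    have hval : θh ((MulAut.conj y⁻¹) x)⁻¹ = θh x⁻¹ := by
      show θ (e (((MulAut.conj y⁻¹) x)⁻¹)) = θ (e x⁻¹)
      rw [hcx]
      have h1 : e ((y⁻¹ * x * y)⁻¹) = (e y)⁻¹ * e x⁻¹ * ((e y)⁻¹)⁻¹ := by
        simp only [map_mul, map_inv]
        group
      rw [h1]
      exact FDRep.char_conj Vθ (e x⁻¹) ((e y)⁻¹)
    have hmul : x * y = y * (y⁻¹ * x * y) := by group
    rw [hval, map_smul]
    congr 1
    rw [hcx, ← Module.End.mul_apply, ← map_mul, hmul, map_mul, Module.End.mul_apply]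
  obtain ⟨cT, hcT⟩ := schur_scalar Vθ T hTcomm
  have htraceT : LinearMap.trace ℂ Vθ T = n * charInner θ θh := by
    rw [hT, map_sum]
    have hterm : ∀ x : ↥X,
        LinearMap.trace ℂ Vθ (θh x⁻¹ • (Vθ.ρ x : Vθ →ₗ[ℂ] Vθ)) = θ x * θh x⁻¹ := by
      intro x
      rw [map_smul]
      have : LinearMap.trace ℂ Vθ (Vθ.ρ x) = θ x := rfl
      rw [this, smul_eq_mul, mul_comm]
    rw [Finset.sum_congr rfl (fun x _ => hterm x), sum_mul_inv_eq θ θh, hn]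
  have hT0 : T = 0 := by
    have hTid : T = cT • LinearMap.id := by ext v; rw [hcT v]; rfl
    have h1 : cT * (finrank ℂ Vθ : ℂ) = 0 := by
      have h2 : LinearMap.trace ℂ Vθ T = cT * (finrank ℂ Vθ : ℂ) := by
        rw [hTid, map_smul, LinearMap.trace_id, smul_eq_mul]
      rw [← h2, htraceT, horth, mul_zero]
    have h2 : cT = 0 := by
      rcases mul_eq_zero.mp h1 with h' | h'
      · exact h'
      · exact absurd h' (simple_finrank_ne_zero Vθ)
    rw [hTid, h2, zero_smul]
  -- convolution vanishes
  have hK : ∀ z : ↥X, (∑ x : ↥X, θh x⁻¹ * θ (z⁻¹ * x)) = 0 := by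
    intro z
    have h1 : ((Vθ.ρ z⁻¹ : Vθ →ₗ[ℂ] Vθ) * T) = ∑ x : ↥X, θh x⁻¹ • ((Vθ.ρ (z⁻¹ * x) : Vθ →ₗ[ℂ] Vθ)) := by
      rw [hT, Finset.mul_sum]
      refine Finset.sum_congr rfl fun x _ => ?_
      rw [mul_smul_comm, ← map_mul]
    have h2 : LinearMap.trace ℂ Vθ ((Vθ.ρ z⁻¹ : Vθ →ₗ[ℂ] Vθ) * T)
        = ∑ x : ↥X, θh x⁻¹ * θ (z⁻¹ * x) := by
      rw [h1, map_sum]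
      refine Finset.sum_congr rfl fun x _ => ?_
      rw [map_smul]
      have : LinearMap.trace ℂ Vθ (Vθ.ρ (z⁻¹ * x)) = θ (z⁻¹ * x) := rfl
      rw [this, smul_eq_mul]
    rw [← h2, hT0, mul_zero, map_zero]
  -- R * P = 0
  set R : Wl →ₗ[ℂ] Wl := ∑ x : ↥X, θh x⁻¹ • (Wl.ρ (incl x) : Wl →ₗ[ℂ] Wl) with hR
  have hRP : R * P = 0 := by
    rw [hR, hP, Finset.sum_mul_sum]
    have hxy : ∀ x y : ↥X,
        (θh x⁻¹ • (Wl.ρ (incl x) : Wl →ₗ[ℂ] Wl)) * (θ y⁻¹ • (Wl.ρ (incl y) : Wl →ₗ[ℂ] Wl))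
          = (θh x⁻¹ * θ y⁻¹) • (Wl.ρ (incl (x * y)) : Wl →ₗ[ℂ] Wl) := by
      intro x y
      rw [smul_mul_assoc, mul_smul_comm, smul_smul, ← map_mul, ← map_mul]
    calc (∑ x : ↥X, ∑ y : ↥X,
            (θh x⁻¹ • (Wl.ρ (incl x) : Wl →ₗ[ℂ] Wl)) * (θ y⁻¹ • (Wl.ρ (incl y) : Wl →ₗ[ℂ] Wl)))
        = ∑ x : ↥X, ∑ z : ↥X, (θh x⁻¹ * θ (z⁻¹ * x)) • (Wl.ρ (incl z) : Wl →ₗ[ℂ] Wl) := by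
          refine Finset.sum_congr rfl fun x _ => ?_
          rw [Finset.sum_congr rfl (fun y _ => hxy x y)]
          refine Fintype.sum_equiv (Equiv.mulLeft x) _ _ fun y => ?_
          show (θh x⁻¹ * θ y⁻¹) • (Wl.ρ (incl (x * y)) : Wl →ₗ[ℂ] Wl)
              = (θh x⁻¹ * θ ((x * y)⁻¹ * x)) • (Wl.ρ (incl (x * y)) : Wl →ₗ[ℂ] Wl)
          congr 2
          group
      _ = ∑ z : ↥X, (∑ x : ↥X, θh x⁻¹ * θ (z⁻¹ * x)) • (Wl.ρ (incl z) : Wl →ₗ[ℂ] Wl) := by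
          rw [Finset.sum_comm]
          refine Finset.sum_congr rfl fun z _ => ?_
          rw [Finset.sum_smul]
      _ = 0 := by
          refine Finset.sum_eq_zero fun z _ => ?_
          rw [hK z, zero_smul]
  have hR0 : R = 0 := by
    have h1 : R * P = cP • R := by
      rw [hPid, ← Module.End.one_eq_id, mul_smul_comm, mul_one]
    rw [hRP] at h1
    rcases smul_eq_zero.mp h1.symm with h' | h'
    · exact absurd h' hcP0
    · exact h'
  -- contradiction with ha
  have htraceR : LinearMap.trace ℂ Wl R = n * charInner lamX θh := by
    rw [hR, map_sum]
    have hterm : ∀ x : ↥X,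
        LinearMap.trace ℂ Wl (θh x⁻¹ • (Wl.ρ (incl x) : Wl →ₗ[ℂ] Wl)) = lamX x * θh x⁻¹ := by
      intro x
      rw [map_smul]
      have : LinearMap.trace ℂ Wl (Wl.ρ (incl x)) = lamX x := rfl
      rw [this, smul_eq_mul, mul_comm]
    rw [Finset.sum_congr rfl (fun x _ => hterm x), sum_mul_inv_eq lamX θh, hn]
  rw [hR0, map_zero] at htraceR
  have : charInner lamX θh = 0 := by
    rcases mul_eq_zero.mp htraceR.symm with h' | h'
    · exact absurd h' hn0
    · exact h'
  exact ha this

end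

end StmtNine

namespace StmtNine
open CategoryTheory FDRep Module Representation
noncomputable section
set_option linter.unusedSectionVars false
variable {G H : Type} [Group G] [Group H] [Fintype G]

lemma indCharTop_apply {Y : Type} [Group Y] [Fintype Y] (I : Subgroup Y) (f : ↥I → ℂ) (y : Y) :
    indCharTop I f y = (Fintype.card ↥I : ℂ)⁻¹ *
      ∑ g : Y, if h : g * y * g⁻¹ ∈ I then f ⟨_, h⟩ else 0 := by
  rw [indCharTop, finsum_eq_sum_of_fintype, Nat.card_eq_fintype_card]

lemma char_conjNormal_mem {Y : Type} [Group Y] {N : Subgroup Y} [N.Normal]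
    (V : FDRep ℂ ↥N) (j z : ↥N) :
    V.character (MulAut.conjNormal (↑j : Y) z) = V.character z := by
  have h : MulAut.conjNormal (↑j : Y) z = j * z * j⁻¹ := Subtype.ext (by simp)
  rw [h, FDRep.char_conj]

lemma charInner_twist (f : G → ℂ) (η : G →* ℂ) :
    charInner (fun g => η g * f g) (fun g => η g * f g) = charInner f f := by
  rw [charInner_apply, charInner_apply]
  congr 1
  refine Finset.sum_congr rfl fun g _ => ?_
  have h1 : η g * η g⁻¹ = 1 := by rw [← map_mul, mul_inv_cancel, map_one]
  have h2 : (η g * f g) * (η g⁻¹ * f g⁻¹) = (η g * η g⁻¹) * (f g * f g⁻¹) := by ring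
  rw [h2, h1, one_mul]
end
end StmtNine

open StmtNine CategoryTheory FDRep Module

/-- Let `X ⊴ Y` with `Y/X` abelian, `ϑ ∈ Irr(X)` with inertia group `I = I_Y(ϑ)`,
`λ ∈ Irr(I | ϑ)` with `λ^Y = ψ ∈ Irr(Y)`. If `σ` is a Galois automorphism, `t ∈ Y` with
`ϑ^σ = ϑ^t` and `ψ^σ = ψη` with `η` linear trivial on `X`, then
`(λ^σ)^{t⁻¹} = λ·η|_I`. -/
theorem stmt_9 {Y : Type} [Group Y] [Fintype Y] (X I : Subgroup Y)
    [hN : X.Normal] [hIN : I.Normal] (hXI : X ≤ I)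
    (hab : ∀ a b : Y ⧸ X, a * b = b * a)
    (ϑ : ↥X → ℂ) (hϑ : IsIrredChar ↥X ϑ)
    (hI : ∀ y : Y, y ∈ I ↔ ∀ x : ↥X, ϑ ⟨y * ↑x * y⁻¹, hN.conj_mem ↑x x.2 y⟩ = ϑ x)
    (lam : ↥I → ℂ) (hlam : IsIrredChar ↥I lam)
    (hlamϑ : charInner (fun x : ↥X => lam (Subgroup.inclusion hXI x)) ϑ ≠ 0)
    (ψ : Y → ℂ) (hψdef : ψ = indCharTop I lam) (hψ : IsIrredChar Y ψ)
    (σ : ℂ →+* ℂ) (t : Y)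
    (hϑσ : ∀ x : ↥X, σ (ϑ x) = ϑ ⟨t * ↑x * t⁻¹, hN.conj_mem ↑x x.2 t⟩)
    (η : Y →* ℂ) (hη : ∀ x ∈ X, η x = 1)
    (hψσ : ∀ y : Y, σ (ψ y) = ψ y * η y) :
    ∀ i : ↥I, σ (lam ⟨t⁻¹ * ↑i * t⁻¹⁻¹, hIN.conj_mem ↑i i.2 t⁻¹⟩) = lam i * η ↑i := by
  classical
  obtain ⟨Wl, hWlS, rfl⟩ := hlam
  obtain ⟨Vθ, hVθS, rfl⟩ := hϑ
  haveI := hWlS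
  haveI := hVθS
  -- abbreviations
  set cI : Y →* MulAut ↥I := MulAut.conjNormal with hcI
  set cX : Y →* MulAut ↥X := MulAut.conjNormal with hcX
  set incl : ↥X →* ↥I := Subgroup.inclusion hXI with hincl
  set μ : ↥I → ℂ := fun i => σ (Wl.character (cI t⁻¹ i)) with hμ
  set ν : ↥I → ℂ := fun i => Wl.character i * η ↑i with hν
  set lamX : ↥X → ℂ := fun x => Wl.character (incl x) with hlamX
  set θ : ↥X → ℂ := Vθ.character with hθ
  have hcardI : (Fintype.card ↥I : ℂ) ≠ 0 := by exact_mod_cast Fintype.card_ne_zero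
  have hcardX : (Fintype.card ↥X : ℂ) ≠ 0 := by exact_mod_cast Fintype.card_ne_zero
  -- composition helpers
  have hIcomp : ∀ (a b : Y) (i : ↥I), cI a (cI b i) = cI (a * b) i := by
    intro a b i; rw [map_mul]; rfl
  have hXcomp : ∀ (a b : Y) (x : ↥X), cX a (cX b x) = cX (a * b) x := by
    intro a b x; rw [map_mul]; rfl
  have hXone : ∀ x : ↥X, cX 1 x = x := by intro x; rw [map_one]; rfl
  -- η is conjugation invariant
  have hηconj : ∀ (g y : Y), η (g * y * g⁻¹) = η y := by
    intro g y
    have h1 : η g * η g⁻¹ = 1 := by rw [← map_mul, mul_inv_cancel, map_one]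
    calc η (g * y * g⁻¹) = η g * η y * η g⁻¹ := by rw [map_mul, map_mul]
    _ = (η g * η g⁻¹) * η y := by ring
    _ = η y := by rw [h1, one_mul]
  -- class function properties
  have hμconj : ∀ (g : Y), g ∈ I → ∀ (i : ↥I), μ (cI g i) = μ i := by
    intro g hg i
    have hgI : t⁻¹ * g * t ∈ I := by simpa using hIN.conj_mem g hg t⁻¹
    have h1 : (cI t⁻¹) ((cI g) i) = (cI ↑(⟨t⁻¹ * g * t, hgI⟩ : ↥I)) ((cI t⁻¹) i) := by
      apply Subtype.ext
      simp only [hcI, MulAut.conjNormal_apply]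
      group
    rw [hμ]
    show σ (Wl.character ((cI t⁻¹) ((cI g) i))) = σ (Wl.character ((cI t⁻¹) i))
    rw [h1, hcI, char_conjNormal_mem]
  have hνconj : ∀ (g : Y), g ∈ I → ∀ (i : ↥I), ν (cI g i) = ν i := by
    intro g hg i
    rw [hν]
    show Wl.character ((cI g) i) * η ↑((cI g) i) = Wl.character i * η ↑i
    have h1 : Wl.character ((cI g) i) = Wl.character i := by
      have : (cI g) i = (cI ↑(⟨g, hg⟩ : ↥I)) i := rfl
      rw [this, hcI, char_conjNormal_mem]
    have h2 : η ↑((cI g) i) = η ↑i := by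
      have : ((cI g) i : Y) = g * ↑i * g⁻¹ := rfl
      rw [this, hηconj]
    rw [h1, h2]
  -- Step B : the induced characters of μ and ν agree
  have hψappσ : ∀ y : Y, σ (ψ y) = indCharTop I μ y := by
    intro y
    rw [hψdef, indCharTop_apply, indCharTop_apply, map_mul, map_inv₀, map_natCast, map_sum]
    congr 1
    have hterm : ∀ g : Y, σ (if h : g * y * g⁻¹ ∈ I then Wl.character ⟨g * y * g⁻¹, h⟩ else 0)
        = if h : g * y * g⁻¹ ∈ I then σ (Wl.character ⟨g * y * g⁻¹, h⟩) else 0 := by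
      intro g; split <;> simp
    rw [Finset.sum_congr rfl (fun g _ => hterm g)]
    have halg : ∀ g : Y, (t * g) * y * (t * g)⁻¹ = t * (g * y * g⁻¹) * t⁻¹ := by
      intro g; group
    refine Fintype.sum_equiv (Equiv.mulLeft t) _ _ fun g => ?_
    simp only [Equiv.coe_mulLeft]
    by_cases h : g * y * g⁻¹ ∈ I
    · have h' : (t * g) * y * (t * g)⁻¹ ∈ I := by rw [halg g]; exact hIN.conj_mem _ h t
      rw [dif_pos h]; simp only [h', ↓reduceDIte]
      rw [hμ]
      refine congrArg σ (congrArg Wl.character (Subtype.ext ?_))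
      show g * y * g⁻¹ = t⁻¹ * ((t * g) * y * (t * g)⁻¹) * t⁻¹⁻¹
      group
    · have h' : ¬((t * g) * y * (t * g)⁻¹ ∈ I) := by
        intro hmem
        rw [halg g] at hmem
        have h2 := hIN.conj_mem _ hmem t⁻¹
        apply h
        have h3 : t⁻¹ * (t * (g * y * g⁻¹) * t⁻¹) * t⁻¹⁻¹ = g * y * g⁻¹ := by group
        rwa [h3] at h2
      rw [dif_neg h]; simp only [h', ↓reduceDIte]
  have hind_ν : ∀ y : Y, indCharTop I ν y = indCharTop I Wl.character y * η y := by
    intro y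
    rw [indCharTop_apply, indCharTop_apply, mul_assoc, Finset.sum_mul]
    congr 1
    refine Finset.sum_congr rfl fun g _ => ?_
    by_cases h : g * y * g⁻¹ ∈ I
    · rw [dif_pos h, dif_pos h, hν]
      show Wl.character ⟨g * y * g⁻¹, h⟩ * η (g * y * g⁻¹)
          = Wl.character ⟨g * y * g⁻¹, h⟩ * η y
      rw [hηconj]
    · rw [dif_neg h, dif_neg h, zero_mul]
  have hE1 : ∀ y : Y, indCharTop I μ y = indCharTop I ν y := by
    intro y
    rw [← hψappσ y, hψσ y, hind_ν y, hψdef]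
  -- Step C : the star identity
  have hstar : ∀ i : ↥I, ∑ g : Y, (μ (cI g i) - ν (cI g i)) = 0 := by
    intro i
    have h1 := hE1 ↑i
    rw [indCharTop_apply, indCharTop_apply] at h1
    have h2 := mul_left_cancel₀ (inv_ne_zero hcardI) h1
    have h3 : ∀ (f : ↥I → ℂ) (g : Y),
        (if h : g * ↑i * g⁻¹ ∈ I then f ⟨_, h⟩ else 0) = f (cI g i) := by
      intro f g
      rw [dif_pos (hIN.conj_mem ↑i i.2 g)]
      exact congrArg f (Subtype.ext rfl)
    rw [Finset.sum_congr rfl (fun g _ => h3 μ g), Finset.sum_congr rfl (fun g _ => h3 ν g)] at h2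
    rw [Finset.sum_sub_distrib, h2, sub_self]
  have hswap : ∑ g : Y, (∑ i : ↥I, (μ (cI g i) - ν (cI g i)) * μ i⁻¹) = 0 := by
    rw [Finset.sum_comm]
    refine Finset.sum_eq_zero fun i _ => ?_
    rw [← Finset.sum_mul, hstar i, zero_mul]
  -- Step D : representations with characters μ and ν, and their conjugates
  let Wmu : FDRep ℂ ↥I := galRep σ (compRep Wl (cI t⁻¹).toMonoidHom)
  have hWmu_char : Wmu.character = μ := by
    funext i
    rw [show Wmu.character i = σ ((compRep Wl (cI t⁻¹).toMonoidHom).character i) from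
      galRep_character σ _ i, compRep_character]
    rfl
  haveI hSmu : Simple Wmu := by
    apply simple_of_charInner_one
    rw [hWmu_char, hμ]
    have h1 : charInner (fun i : ↥I => σ (Wl.character ((cI t⁻¹) i)))
        (fun i : ↥I => σ (Wl.character ((cI t⁻¹) i)))
        = σ (charInner (fun i : ↥I => Wl.character ((cI t⁻¹) i))
              (fun i : ↥I => Wl.character ((cI t⁻¹) i))) :=
      charInner_map σ _ _
    have h2 : charInner (fun i : ↥I => Wl.character ((cI t⁻¹) i))
        (fun i : ↥I => Wl.character ((cI t⁻¹) i))
        = charInner Wl.character Wl.character :=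
      charInner_comp_mulEquiv (cI t⁻¹) _ _
    rw [h1, h2, charInner_self_one Wl, map_one]
  let Wnu : FDRep ℂ ↥I := twistRep Wl (η.comp I.subtype)
  have hWnu_char : Wnu.character = ν := by
    funext i
    rw [show Wnu.character i = (η.comp I.subtype) i * Wl.character i from
      twistRep_character Wl _ i, hν]
    show η ↑i * Wl.character i = Wl.character i * η ↑i
    rw [mul_comm]
  haveI hSnu : Simple Wnu := by
    apply simple_of_charInner_one
    rw [hWnu_char, hν]
    have hfix : (fun i : ↥I => Wl.character i * η ↑i)
        = fun i : ↥I => (η.comp I.subtype) i * Wl.character i :=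
      funext fun i => mul_comm _ _
    rw [hfix, charInner_twist Wl.character (η.comp I.subtype), charInner_self_one Wl]
  let WmuC : Y → FDRep ℂ ↥I := fun g => compRep Wmu (cI g).toMonoidHom
  have hWmuC_char : ∀ g : Y, (WmuC g).character = fun i => μ ((cI g) i) := by
    intro g; funext i
    rw [show (WmuC g).character i = Wmu.character ((cI g) i) from compRep_character _ _ i, hWmu_char]
  have hSmuC : ∀ g : Y, Simple (WmuC g) := by
    intro g
    apply simple_of_charInner_one
    rw [hWmuC_char g]
    have h2 : charInner (fun i : ↥I => μ ((cI g) i)) (fun i : ↥I => μ ((cI g) i))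
        = charInner μ μ := charInner_comp_mulEquiv (cI g) μ μ
    rw [h2, ← hWmu_char, charInner_self_one Wmu]
  let WnuC : Y → FDRep ℂ ↥I := fun g => compRep Wnu (cI g).toMonoidHom
  have hWnuC_char : ∀ g : Y, (WnuC g).character = fun i => ν ((cI g) i) := by
    intro g; funext i
    rw [show (WnuC g).character i = Wnu.character ((cI g) i) from compRep_character _ _ i, hWnu_char]
  have hSnuC : ∀ g : Y, Simple (WnuC g) := by
    intro g
    apply simple_of_charInner_one
    rw [hWnuC_char g]
    have h2 : charInner (fun i : ↥I => ν ((cI g) i)) (fun i : ↥I => ν ((cI g) i))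
        = charInner ν ν := charInner_comp_mulEquiv (cI g) ν ν
    rw [h2, ← hWnu_char, charInner_self_one Wnu]
  -- Step E : restriction to X
  set m : ↥X → ℂ := fun x => μ (incl x) with hm_def
  have hcIincl : ∀ (b : Y) (x : ↥X), (cI b) (incl x) = incl ((cX b) x) := by
    intro b x; exact Subtype.ext rfl
  have hm : ∀ x : ↥X, m x = σ (lamX ((cX t⁻¹) x)) := by
    intro x
    show σ (Wl.character ((cI t⁻¹) (incl x))) = σ (Wl.character (incl ((cX t⁻¹) x)))
    rw [hcIincl]
  have hσθ : ∀ z : ↥X, σ (θ z) = θ ((cX t) z) := by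
    intro z
    have h1 := hϑσ z
    have h2 : (⟨t * ↑z * t⁻¹, hN.conj_mem ↑z z.2 t⟩ : ↥X) = (cX t) z := Subtype.ext rfl
    rw [h2] at h1
    exact h1
  have hθσ : ∀ w : ↥X, θ w = σ (θ ((cX t⁻¹) w)) := by
    intro w
    have h1 := hσθ ((cX t⁻¹) w)
    rw [hXcomp, mul_inv_cancel] at h1
    rw [h1, hXone]
  have hkey : ∀ b : Y, charInner m (fun x => θ ((cX b) x))
      = σ (charInner lamX (fun x => θ ((cX (t⁻¹ * b * t)) x))) := by
    intro b
    rw [charInner_apply, charInner_apply, map_mul, map_inv₀, map_natCast, map_sum]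
    congr 1
    refine Fintype.sum_equiv ((cX t⁻¹ : ↥X ≃* ↥X)).toEquiv _ _ fun x => ?_
    show m x * θ ((cX b) x⁻¹)
        = σ (lamX ((cX t⁻¹) x) * θ ((cX (t⁻¹ * b * t)) (((cX t⁻¹) x)⁻¹)))
    rw [map_mul, ← hm x]
    congr 1
    have h1 : (((cX t⁻¹) x)⁻¹ : ↥X) = (cX t⁻¹) x⁻¹ := by rw [← map_inv]
    rw [h1, hXcomp]
    have h2 : t⁻¹ * b * t * t⁻¹ = t⁻¹ * b := by group
    rw [h2]
    have h3 : (cX (t⁻¹ * b)) x⁻¹ = (cX t⁻¹) ((cX b) x⁻¹) := by rw [hXcomp]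
    rw [h3]
    exact hθσ ((cX b) x⁻¹)
  have hm0 : charInner m θ = σ (charInner lamX θ) := by
    have h1 := hkey 1
    have h2 : (fun x : ↥X => θ ((cX 1) x)) = θ := funext fun x => congrArg θ (hXone x)
    have h3 : t⁻¹ * 1 * t = 1 := by group
    rw [h3, h2] at h1
    exact h1
  have hm0ne : charInner m θ ≠ 0 := by
    rw [hm0]
    intro hc
    exact hlamϑ (σ.injective (by rw [hc, map_zero]))
  have hcompLeft : ∀ (f : ↥X → ℂ) (b : Y),
      charInner (fun x => f ((cX b) x)) θ = charInner f (fun x => θ ((cX b⁻¹) x)) := by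
    intro f b
    have h1 := charInner_comp_left (cX b : ↥X ≃* ↥X) f θ
    rw [h1]
    have h2 : (fun x => θ ((cX b).symm x)) = (fun x => θ ((cX b⁻¹) x)) := by
      funext x
      refine congrArg θ (Subtype.ext ?_)
      show ((cX b).symm x : Y) = ((cX b⁻¹) x : Y)
      rw [hcX]
      simp
    rw [h2]
  have hInvθ : ∀ (i : ↥I) (x : ↥X),
      Vθ.character ((MulAut.conjNormal (↑i : Y)) x) = Vθ.character x := by
    intro i x
    have h1 := (hI ↑i).mp i.2 x
    have h2 : (MulAut.conjNormal (↑i : Y)) x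
        = (⟨↑i * ↑x * (↑i)⁻¹, hN.conj_mem ↑x x.2 ↑i⟩ : ↥X) := Subtype.ext rfl
    rw [h2]
    exact h1
  have hmemI : ∀ b : Y, (∀ x : ↥X, θ ((cX b) x) = θ x) → b ∈ I := by
    intro b hb
    refine (hI b).mpr fun x => ?_
    have h2 : (⟨b * ↑x * b⁻¹, hN.conj_mem ↑x x.2 b⟩ : ↥X) = (cX b) x := Subtype.ext rfl
    rw [h2]
    exact hb x
  have hdagger : ∀ b : Y, charInner lamX (fun x => θ ((cX b) x)) ≠ 0 → b ∈ I := by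
    intro b hb
    refine hmemI b (clifford_aux hXI Vθ Wl hInvθ hlamϑ b hb)
  have hA : ∀ g : Y, ((WmuC g).character = Wmu.character) → g ∈ I := by
    intro g hchar
    have hfI : (fun i : ↥I => μ ((cI g) i)) = μ := by
      rw [← hWmuC_char g, hchar, hWmu_char]
    have hfix : ∀ x : ↥X, m ((cX g) x) = m x := by
      intro x
      show μ (incl ((cX g) x)) = μ (incl x)
      rw [← hcIincl g x]
      exact congrFun hfI (incl x)
    have h2 : charInner m (fun x => θ ((cX g⁻¹) x)) = charInner m θ := by
      rw [← hcompLeft m g, show (fun x => m ((cX g) x)) = m from funext hfix]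
    have h3 : charInner m (fun x => θ ((cX g⁻¹) x)) ≠ 0 := by rw [h2]; exact hm0ne
    rw [hkey g⁻¹] at h3
    have h4 : charInner lamX (fun x => θ ((cX (t⁻¹ * g⁻¹ * t)) x)) ≠ 0 := by
      intro hc; apply h3; rw [hc, map_zero]
    have h6 : t⁻¹ * g⁻¹ * t ∈ I := hdagger _ h4
    have h9 := hIN.conj_mem _ h6 t
    have h10 : t * (t⁻¹ * g⁻¹ * t) * t⁻¹ = g⁻¹ := by group
    rw [h10] at h9
    exact inv_mem_iff.mp h9
  have hB : ∀ g : Y, ((WnuC g).character = Wmu.character) → g ∈ I := by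
    intro g hchar
    have hfI : (fun i : ↥I => ν ((cI g) i)) = μ := by
      rw [← hWnuC_char g, hchar, hWmu_char]
    have hfix : ∀ x : ↥X, lamX ((cX g) x) = m x := by
      intro x
      have h1 := congrFun hfI (incl x)
      rw [hcIincl g x] at h1
      -- h1 : ν (incl ((cX g) x)) = μ (incl x)
      have h2 : ν (incl ((cX g) x)) = lamX ((cX g) x) * η ↑((cX g) x) := rfl
      have h3 : η ↑((cX g) x) = 1 := hη _ ((cX g) x).2
      rw [h2, h3, mul_one] at h1
      exact h1
    have h2 : charInner lamX (fun x => θ ((cX g⁻¹) x)) = charInner m θ := by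
      rw [← hcompLeft lamX g, show (fun x => lamX ((cX g) x)) = m from funext hfix]
    have h3 : charInner lamX (fun x => θ ((cX g⁻¹) x)) ≠ 0 := by rw [h2]; exact hm0ne
    have h6 : g⁻¹ ∈ I := hdagger _ h3
    exact inv_mem_iff.mp h6
  -- Step F : final assembly
  set q : ℂ := charInner Wnu.character Wmu.character with hq
  have hgsum : ∀ g : Y, (∑ i : ↥I, (μ ((cI g) i) - ν ((cI g) i)) * μ i⁻¹)
      = if g ∈ I then (Fintype.card ↥I : ℂ) * (1 - q) else 0 := by
    intro g
    have hsplit : ∑ i : ↥I, (μ ((cI g) i) - ν ((cI g) i)) * μ i⁻¹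
        = (∑ i : ↥I, μ ((cI g) i) * μ i⁻¹) - (∑ i : ↥I, ν ((cI g) i) * μ i⁻¹) := by
      rw [← Finset.sum_sub_distrib]
      exact Finset.sum_congr rfl fun i _ => by rw [sub_mul]
    by_cases hg : g ∈ I
    · rw [if_pos hg, hsplit]
      have hA' : ∑ i : ↥I, μ ((cI g) i) * μ i⁻¹ = (Fintype.card ↥I : ℂ) * 1 := by
        rw [Finset.sum_congr rfl (fun i _ => by rw [hμconj g hg i]), sum_mul_inv_eq μ μ,
          ← hWmu_char, charInner_self_one Wmu]
      have hB' : ∑ i : ↥I, ν ((cI g) i) * μ i⁻¹ = (Fintype.card ↥I : ℂ) * q := by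
        rw [Finset.sum_congr rfl (fun i _ => by rw [hνconj g hg i]), sum_mul_inv_eq ν μ, hq,
          hWnu_char, hWmu_char]
      rw [hA', hB']
      ring
    · rw [if_neg hg, hsplit]
      have hA0 : ∑ i : ↥I, μ ((cI g) i) * μ i⁻¹ = 0 := by
        haveI := hSmuC g
        rw [sum_mul_inv_eq (fun i => μ ((cI g) i)) μ, ← hWmuC_char g, ← hWmu_char,
          charInner_char_char (WmuC g) Wmu, if_neg, mul_zero]
        rintro ⟨iso⟩
        exact hg (hA g (char_iso iso))
      have hB0 : ∑ i : ↥I, ν ((cI g) i) * μ i⁻¹ = 0 := by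
        haveI := hSnuC g
        rw [sum_mul_inv_eq (fun i => ν ((cI g) i)) μ, ← hWnuC_char g, ← hWmu_char,
          charInner_char_char (WnuC g) Wmu, if_neg, mul_zero]
        rintro ⟨iso⟩
        exact hg (hB g (char_iso iso))
      rw [hA0, hB0, sub_zero]
  have htot : ∑ g : Y, (if g ∈ I then (Fintype.card ↥I : ℂ) * (1 - q) else 0) = 0 := by
    have h1 : ∑ g : Y, (∑ i : ↥I, (μ ((cI g) i) - ν ((cI g) i)) * μ i⁻¹)
        = ∑ g : Y, (if g ∈ I then ((Fintype.card ↥I : ℂ)) * (1 - q) else 0) :=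
      Finset.sum_congr rfl (fun g _ => hgsum g)
    rw [← h1]
    exact hswap
  rw [← Finset.sum_filter, Finset.sum_const, nsmul_eq_mul] at htot
  have hcardfilter : ((Finset.univ.filter (fun g : Y => g ∈ I)).card : ℂ)
      = (Fintype.card ↥I : ℂ) := by
    norm_cast
    exact (Fintype.card_subtype (fun g : Y => g ∈ I)).symm
  rw [hcardfilter] at htot
  have hq1 : q = 1 := by
    have h1 : (1 : ℂ) - q = 0 := by
      rcases mul_eq_zero.mp htot with h' | h'
      · exact absurd h' hcardI
      · rcases mul_eq_zero.mp h' with h'' | h''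
        · exact absurd h'' hcardI
        · exact h''
    linear_combination -h1
  have hiso : Nonempty (Wnu ≅ Wmu) := by
    by_contra hn
    rw [hq, charInner_char_char Wnu Wmu, if_neg hn] at hq1
    exact zero_ne_one hq1
  have hchareq : Wnu.character = Wmu.character := char_iso hiso.some
  have hμν : ∀ i : ↥I, ν i = μ i := by
    intro i
    rw [← hWnu_char, ← hWmu_char, hchareq]
  intro i
  have h2 : (⟨t⁻¹ * ↑i * t⁻¹⁻¹, hIN.conj_mem ↑i i.2 t⁻¹⟩ : ↥I) = (cI t⁻¹) i := Subtype.ext rfl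
  rw [h2]
  exact (hμν i).symm
end

section
/- Let Y be a finite group with subgroups X ⊴ Y and let σ ∈ Gal(Q_{|Y|}/Q). Suppose ψ ∈ Irr(Y) restricts multiplicity-free to X and ψ|_X is σ-invariant (as a character of X). Then ψ^σ = ψη for some linear character η ∈ Irr(Y | 1_X). -/
open scoped Classical BigOperators

/-!
Let `ψ` be afforded by the simple representation `V`, and let `W` be its `σ`-conjugate (apply
`σ` to the matrix entries), whose character is `σ ∘ ψ`; both characters have norm one, so `W` is
simple too. Since `ψ` and `σ ∘ ψ` agree on `X`, the space `Hom_X(V, W)` is nonzero. The group `Y`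
acts on it by conjugation with `X` acting trivially, so the abelian group `Y/X` has a common
eigenvector `f` there, with eigencharacter `η`. Then `f` is a nonzero `Y`-map from `V ⊗ η` to
`W`, hence an isomorphism by Schur's lemma, and comparing characters gives `ψ^σ = ψη`.
-/

open CategoryTheory Module Representation

theorem Module.End.exists_common_eigenvector {K V ι : Type*} [Field K] [IsAlgClosed K]
    [AddCommGroup V] [Module K V] [FiniteDimensional K V] [Nontrivial V]
    (f : ι → Module.End K V) (hf : ∀ i j, Commute (f i) (f j)) :
    ∃ v ≠ 0, ∀ i, ∃ μ : K, f i v = μ • v := by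
  obtain ⟨p, ⟨hp, hpf⟩, hmin⟩ := (wellFounded_lt (α := Submodule K V)).has_min
    {p | p ≠ ⊥ ∧ ∀ i, Set.MapsTo (f i) p p} ⟨⊤, top_ne_bot, fun _ _ _ ↦ trivial⟩
  obtain ⟨v, hvp, hv⟩ := Submodule.exists_mem_ne_zero_of_ne_bot hp
  refine ⟨v, hv, fun i ↦ ?_⟩
  have : Nontrivial p := Submodule.nontrivial_iff_ne_bot.2 hp
  obtain ⟨μ, hμ⟩ := Module.End.exists_eigenvalue ((f i).restrict (hpf i))
  obtain ⟨w, hw⟩ := hμ.exists_hasEigenvector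
  have hwE : (w : V) ∈ p ⊓ (f i).eigenspace μ :=
    ⟨w.2, Module.End.mem_eigenspace_iff.2 (congrArg Subtype.val hw.apply_eq_smul)⟩
  have hE : p ⊓ (f i).eigenspace μ = p := by
    refine (inf_le_left.lt_or_eq).resolve_left fun hlt ↦ hmin _ ⟨?_, fun j ↦ ?_⟩ hlt
    · exact fun h ↦ hw.2 (Subtype.ext (by simpa [h] using hwE))
    · exact (hpf j).inter_inter (Module.End.mapsTo_genEigenspace_of_comm (hf i j) μ 1)
  exact ⟨μ, Module.End.mem_eigenspace_iff.1 (hE.ge hvp).2⟩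

namespace Representation

section Monoid

variable {k G V : Type*} [Field k] [Monoid G] [AddCommGroup V] [Module k V]

theorem exists_eigenvector_of_isMulCommutative [IsAlgClosed k] [FiniteDimensional k V]
    [Nontrivial V] [IsMulCommutative G] (ρ : Representation k G V) :
    ∃ χ : G →* k, ∃ v ≠ 0, ∀ g, ρ g v = χ g • v := by
  obtain ⟨v, hv, hχ⟩ := Module.End.exists_common_eigenvector ρ fun g h ↦ by
    simp only [Commute, SemiconjBy, ← map_mul, mul_comm' g h]
  choose χ hχ using hχ
  have hinj := smul_left_injective k hv
  refine ⟨{ toFun := χ, map_one' := hinj ?_, map_mul' := fun g h ↦ hinj ?_ }, v, hv, hχ⟩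
  · change χ 1 • v = (1 : k) • v
    rw [← hχ, map_one, one_smul, Module.End.one_apply]
  · change χ (g * h) • v = (χ g * χ h) • v
    rw [← hχ, map_mul, Module.End.mul_apply, hχ, map_smul, hχ, smul_smul, mul_comm]

def twist (ρ : Representation k G V) (χ : G →* k) : Representation k G V where
  toFun g := χ g • ρ g
  map_one' := by simp
  map_mul' g h := by simp only [map_mul, smul_mul_smul_comm]

theorem character_twist (ρ : Representation k G V) (χ : G →* k) (g : G) :
    (ρ.twist χ).character g = χ g * ρ.character g := by
  simp [twist, character]

variable [FiniteDimensional k V]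

noncomputable def mapRingHom (σ : k →+* k) (ρ : Representation k G V) :
    Representation k G (Fin (finrank k V) → k) where
  toFun g := Matrix.toLin' ((LinearMap.toMatrix (finBasis k V) (finBasis k V) (ρ g)).map σ)
  map_one' := by simp [Matrix.map_one σ (map_zero σ) (map_one σ), Module.End.one_eq_id]
  map_mul' g h := by
    simp only [map_mul, LinearMap.toMatrix_mul, Matrix.map_mul, Matrix.toLin'_mul]
    rfl

theorem character_mapRingHom (σ : k →+* k) (ρ : Representation k G V) (g : G) :
    (ρ.mapRingHom σ).character g = σ (ρ.character g) := by
  rw [character, character, LinearMap.trace_eq_matrix_trace k (Pi.basisFun k _),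
    LinearMap.trace_eq_matrix_trace k (finBasis k V), LinearMap.toMatrix_eq_toMatrix']
  simp [mapRingHom, Matrix.trace, map_sum]

end Monoid

section Group

variable {k G V W : Type*} [Field k] [Group G] [AddCommGroup V] [Module k V]
  [AddCommGroup W] [Module k W]

theorem nontrivial_invariants_linHom_of_character_eq [Fintype G] [CharZero k]
    [FiniteDimensional k V] [FiniteDimensional k W] [Nontrivial V]
    (ρ : Representation k G V) (σ : Representation k G W) (h : σ.character = ρ.character) :
    Nontrivial (linHom ρ σ).invariants := by
  have : Invertible (Nat.card G : k) := invertibleOfNonzero (Nat.cast_ne_zero.2 Nat.card_pos.ne')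
  have hid : (⟨1, fun g ↦ by ext; simp [linHom_apply]⟩ : (linHom ρ ρ).invariants) ≠ 0 :=
    fun h0 ↦ one_ne_zero (congrArg Subtype.val h0)
  have := nontrivial_of_ne _ _ hid
  rw [← finrank_pos_iff (R := k)] at this ⊢
  have hrank : finrank k (linHom ρ σ).invariants = finrank k (linHom ρ ρ).invariants := by
    rw [← Nat.cast_inj (R := k), ← card_inv_mul_sum_char_eq_finrank,
      ← card_inv_mul_sum_char_eq_finrank]
    simp [char_linHom, h]
  omega

end Group

end Representation

universe u

namespace FDRep

variable {k G : Type u} [Field k] [IsAlgClosed k] [Group G]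

theorem character_eq_of_mem_invariants_linHom {V W : FDRep k G} [Simple V] [Simple W]
    {f : V →ₗ[k] W} (hf : f ∈ (linHom V.ρ W.ρ).invariants) (hf0 : f ≠ 0) :
    V.character = W.character := by
  have : Nontrivial (V ⟶ W) := (linHom.invariantsEquivFDRepHom V W).nontrivial_congr.1 <|
    nontrivial_of_ne (⟨f, hf⟩ : (linHom V.ρ W.ρ).invariants) 0 (hf0 ∘ congrArg Subtype.val)
  have hrank := finrank_hom_simple_simple V W
  split_ifs at hrank with hiso
  · exact char_iso hiso.some
  · exact absurd hrank finrank_pos.ne'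

variable [CharZero k] [Fintype G]

theorem nontrivial_of_simple (V : FDRep k G) [Simple V] : Nontrivial V := by
  refine not_subsingleton_iff_nontrivial.1 fun _ ↦ ?_
  have h := (simple_iff_char_is_norm_one V).1 ‹_›
  simp [FDRep.character, Subsingleton.elim (V.ρ _) 0] at h
  exact Fintype.card_ne_zero (by exact_mod_cast h.symm)

theorem simple_of_mapRingHom (V : FDRep k G) [Simple V] (σ : k →+* k) :
    Simple (FDRep.of (mapRingHom σ V.ρ)) := by
  have h := (simple_iff_char_is_norm_one V).1 ‹_›
  rw [simple_iff_char_is_norm_one]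
  change ∑ g, (mapRingHom σ V.ρ).character g * (mapRingHom σ V.ρ).character g⁻¹ = _
  simp only [character_mapRingHom, ← map_mul, ← map_sum]
  exact (congrArg σ h).trans (map_natCast σ _)

theorem simple_of_twist (V : FDRep k G) [Simple V] (χ : G →* k) :
    Simple (FDRep.of (twist V.ρ χ)) := by
  have h := (simple_iff_char_is_norm_one V).1 ‹_›
  rw [simple_iff_char_is_norm_one]
  change ∑ g, (twist V.ρ χ).character g * (twist V.ρ χ).character g⁻¹ = _
  have hχ (g : G) : χ g * χ g⁻¹ = 1 := by rw [← map_mul, mul_inv_cancel, map_one]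
  refine .trans (Finset.sum_congr rfl fun g _ ↦ ?_) h
  rw [character_twist, character_twist, mul_mul_mul_comm, hχ, one_mul]
  rfl

end FDRep

theorem stmt_14_general {Y : Type} [Group Y] [Fintype Y] (X : Subgroup Y) [X.Normal]
    (hab : ∀ a b : Y ⧸ X, a * b = b * a) (σ : ℂ →+* ℂ)
    (ψ : Y → ℂ) (hψ : IsIrredChar Y ψ)
    (hinv : ∀ x : ↥X, σ (ψ ↑x) = ψ ↑x) :
    ∃ η : Y →* ℂ, (∀ x ∈ X, η x = 1) ∧ ∀ y : Y, σ (ψ y) = ψ y * η y := by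
  obtain ⟨V, hV, rfl⟩ := hψ
  have := V.nontrivial_of_simple
  set W := FDRep.of (mapRingHom σ V.ρ)
  have hW (y : Y) : W.character y = σ (V.character y) := character_mapRingHom σ V.ρ y
  have : Nontrivial (invariants ((linHom V.ρ W.ρ).comp X.subtype)) :=
    nontrivial_invariants_linHom_of_character_eq (V.ρ.comp X.subtype) (W.ρ.comp X.subtype)
      (funext fun x ↦ (hW x).trans (hinv x))
  have : IsMulCommutative (Y ⧸ X) := .of_comm hab
  obtain ⟨χ, ⟨f, _⟩, hf0, hf⟩ :=
    ((linHom V.ρ W.ρ).quotientToInvariants X).exists_eigenvector_of_isMulCommutative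
  set η := χ.comp (QuotientGroup.mk' X)
  have hfy (y : Y) : linHom V.ρ W.ρ y f = η y • f := congrArg Subtype.val (hf y)
  have hfη : f ∈ (linHom (twist V.ρ η) W.ρ).invariants := fun y ↦ by
    change W.ρ y ∘ₗ f ∘ₗ (η y⁻¹ • V.ρ y⁻¹) = f
    rw [LinearMap.comp_smul, LinearMap.comp_smul, ← linHom_apply, hfy, smul_smul, ← map_mul,
      inv_mul_cancel, map_one, one_smul]
  have := V.simple_of_twist η
  have := V.simple_of_mapRingHom σ
  have hchar := FDRep.character_eq_of_mem_invariants_linHom (V := FDRep.of (twist V.ρ η)) (W := W)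
    hfη fun h ↦ hf0 (Subtype.ext h)
  refine ⟨η, fun x hx ↦ by simp [η, (QuotientGroup.eq_one_iff x).2 hx], fun y ↦ ?_⟩
  rw [← hW, ← hchar, mul_comm]
  exact character_twist V.ρ η y

/-- If `Y/X` is abelian, `ψ ∈ Irr(Y)` restricts multiplicity-free to `X` and `ψ|_X` is
`σ`-invariant, then `ψ^σ = ψη` for some linear character `η ∈ Irr(Y | 1_X)`. -/
theorem stmt_14 {Y : Type} [Group Y] [Fintype Y] (X : Subgroup Y) [X.Normal]
    (hab : ∀ a b : Y ⧸ X, a * b = b * a) (σ : ℂ →+* ℂ)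
    (ψ : Y → ℂ) (hψ : IsIrredChar Y ψ)
    (hmf : ∀ ρ : ↥X → ℂ, IsIrredChar ↥X ρ →
      charInner (fun x : ↥X => ψ ↑x) ρ = 0 ∨ charInner (fun x : ↥X => ψ ↑x) ρ = 1)
    (hinv : ∀ x : ↥X, σ (ψ ↑x) = ψ ↑x) :
    ∃ η : Y →* ℂ, (∀ x ∈ X, η x = 1) ∧ ∀ y : Y, σ (ψ y) = ψ y * η y :=
  stmt_14_general X hab σ ψ hψ hinv
end
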